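/- arXiv:2407.05309 — 3 statements merged into one kernel-verified Lean document; each statement's English description precedes it below -/
import Mathlib

section
/- Let μ > 0, D > 0 with D ≠ 1, and α, β, b, G11, G15, G21 be real numbers with α·G15·b ≠ 0. Consider the system of equations in real unknowns (C1, C2): (i) 2·sqrt(μ)·C1 = α·(G11 + G15·(C2 + b·C1/((D-1)·μ))^2) and (ii) β·G21/D = 2·(sqrt(μ/D)·C2 + b·C1/((D-1)·sqrt(μ))). Then this system has two distinct real solution pairs (C1, C2) if and only if Δ > 0, where Δ = 4μ + (4α·G15·b/((1+sqrt(D))·μ))·(β·G21/sqrt(D) - α·b·G11/(μ·(1+sqrt(D)))). -/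
/-!
Solving the second matching equation for `C₂` gives `C₂ + b C₁ / ((D - 1) μ) = u - k C₁`
with `u = β G₂₁ / (2 √μ √D)` and `k = b / ((1 + √D) μ)`, using `D - 1 = (√D - 1)(√D + 1)`.
The first equation then becomes the quadratic
`α G₁₅ k² C₁² - 2 (α G₁₅ u k + √μ) C₁ + α (G₁₁ + G₁₅ u²) = 0`,
whose leading coefficient is nonzero because `α G₁₅ b ≠ 0` and whose discriminant is exactly
`Δ`. Since `C₂` is a function of `C₁` on the solution set, the system has exactly two
solutions iff the quadratic has two distinct roots, i.e. iff `Δ > 0`.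
-/

open Real

theorem Set.encard_setOf_eq_two_iff {α : Type*} (P : α → Prop) :
    {r | P r}.encard = 2 ↔
      ∃ p q, p ≠ q ∧ P p ∧ P q ∧ ∀ r, P r → r = p ∨ r = q := by
  rw [Set.encard_eq_two]
  refine exists₂_congr fun p q => and_congr_right fun _ => ?_
  simp only [Set.ext_iff, Set.mem_ofPred_eq, Set.mem_insert_iff, Set.mem_singleton_iff]
  exact ⟨fun h => ⟨(h p).2 (.inl rfl), (h q).2 (.inr rfl), fun r => (h r).1⟩,
    fun ⟨hp, hq, h⟩ r => ⟨h r, by rintro (rfl | rfl) <;> assumption⟩⟩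

theorem Set.encard_setOf_prod_eq_of_graph {α β : Type*} {P : α × β → Prop} {Q : α → Prop}
    {f : α → β} (h : ∀ x y, P (x, y) ↔ Q x ∧ y = f x) :
    {r | P r}.encard = {x | Q x}.encard := by
  have hgraph : {r | P r} = (fun x => (x, f x)) '' {x | Q x} := by
    ext ⟨x, y⟩
    simp only [Set.mem_ofPred_eq, h, Set.mem_image, Prod.mk.injEq]
    exact ⟨fun ⟨hx, hy⟩ => ⟨x, hx, rfl, hy.symm⟩,
      by rintro ⟨x, hx, rfl, rfl⟩; exact ⟨hx, rfl⟩⟩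
  rw [hgraph, Function.Injective.encard_image fun x x' hxx' => congrArg Prod.fst hxx']

theorem encard_quadratic_roots_eq_two_iff {a b c : ℝ} (ha : a ≠ 0) :
    {x | a * (x * x) + b * x + c = 0}.encard = 2 ↔ 0 < discrim a b c := by
  constructor
  · rw [Set.encard_eq_two]
    rintro ⟨x, y, hxy, hroots⟩
    have hx : x ∈ {x | a * (x * x) + b * x + c = 0} := hroots ▸ Set.mem_insert x {y}
    have hy : y ∈ {x | a * (x * x) + b * x + c = 0} := hroots ▸ Set.mem_insert_of_mem x rfl
    rw [discrim_eq_sq_of_quadratic_eq_zero hx]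
    refine (sq_nonneg _).lt_of_ne fun h0 => hxy ?_
    -- a double root `-b / (2a)` would have to be both `x` and `y`
    have hx0 : 2 * a * x + b = 0 := pow_eq_zero_iff two_ne_zero |>.1 h0.symm
    have hy0 : 2 * a * y + b = 0 := by
      rw [← pow_eq_zero_iff two_ne_zero, ← discrim_eq_sq_of_quadratic_eq_zero hy,
        discrim_eq_sq_of_quadratic_eq_zero hx, ← h0]
    exact mul_left_cancel₀ (mul_ne_zero two_ne_zero ha) (by linarith)
  · intro hpos
    set δ := √(discrim a b c)
    have hδ : δ ≠ 0 := (Real.sqrt_pos.2 hpos).ne'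
    have hroots :
        {x | a * (x * x) + b * x + c = 0} = {(-b + δ) / (2 * a), (-b - δ) / (2 * a)} := by
      ext x
      exact quadratic_eq_zero_iff ha (Real.mul_self_sqrt hpos.le).symm x
    rw [hroots]
    refine Set.encard_pair fun h => hδ ?_
    linarith [(div_left_inj' (mul_ne_zero two_ne_zero ha)).1 h]

theorem two_mul_eq_sq_iff_quadratic (s α G11 G15 u k x : ℝ) :
    2 * s * x = α * (G11 + G15 * (u - k * x) ^ 2) ↔
      α * G15 * k ^ 2 * (x * x) + -2 * (α * G15 * u * k + s) * x +
        α * (G11 + G15 * u ^ 2) = 0 := by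
  constructor <;> intro h <;> linear_combination -h

theorem discrim_two_mul_eq_sq (s α G11 G15 u k : ℝ) :
    discrim (α * G15 * k ^ 2) (-2 * (α * G15 * u * k + s)) (α * (G11 + G15 * u ^ 2)) =
      4 * s ^ 2 + 4 * α * G15 * k * (2 * s * u - α * k * G11) := by
  rw [discrim]
  ring

def PinnedPulseSystem (μ D α β b G11 G15 G21 : ℝ) (C : ℝ × ℝ) : Prop :=
  2 * √μ * C.1 = α * (G11 + G15 * (C.2 + b * C.1 / ((D - 1) * μ)) ^ 2) ∧
    β * G21 / D = 2 * (√(μ / D) * C.2 + b * C.1 / ((D - 1) * √μ))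

theorem pinnedPulse_second_eq_iff {μ D : ℝ} (hμ : 0 < μ) (hD : 0 < D) (hD1 : D ≠ 1)
    (β b G21 x y : ℝ) :
    β * G21 / D = 2 * (√(μ / D) * y + b * x / ((D - 1) * √μ)) ↔
      y = β * G21 / (2 * √μ * √D) - b / ((1 + √D) * μ) * x - b * x / ((D - 1) * μ) := by
  obtain ⟨s, hs, rfl⟩ : ∃ s, 0 < s ∧ μ = s ^ 2 :=
    ⟨√μ, Real.sqrt_pos.2 hμ, (Real.sq_sqrt hμ.le).symm⟩
  obtain ⟨d, hd, rfl⟩ : ∃ d, 0 < d ∧ D = d ^ 2 :=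
    ⟨√D, Real.sqrt_pos.2 hD, (Real.sq_sqrt hD.le).symm⟩
  have hk : b / ((1 + d) * s ^ 2) * x + b * x / ((d ^ 2 - 1) * s ^ 2) =
      d * b * x / ((d ^ 2 - 1) * s ^ 2) := by
    field_simp
    ring
  rw [Real.sqrt_div' _ (sq_nonneg d), Real.sqrt_sq hs.le, Real.sqrt_sq hd.le, sub_sub, hk]
  field_simp
  constructor <;> intro h <;> linear_combination -h

theorem pinnedPulseSystem_iff {μ D : ℝ} (hμ : 0 < μ) (hD : 0 < D) (hD1 : D ≠ 1)
    (α β b G11 G15 G21 x y : ℝ) :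
    PinnedPulseSystem μ D α β b G11 G15 G21 (x, y) ↔
      (let u := β * G21 / (2 * √μ * √D)
        let k := b / ((1 + √D) * μ)
        α * G15 * k ^ 2 * (x * x) + -2 * (α * G15 * u * k + √μ) * x +
          α * (G11 + G15 * u ^ 2) = 0) ∧
      y = β * G21 / (2 * √μ * √D) - b / ((1 + √D) * μ) * x - b * x / ((D - 1) * μ) := by
  rw [PinnedPulseSystem, pinnedPulse_second_eq_iff hμ hD hD1, ← two_mul_eq_sq_iff_quadratic]
  exact and_congr_left fun hy => by rw [hy, sub_add_cancel]

theorem pinned_pulse_existence_iff_discriminant_pos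
    (μ D α β b G11 G15 G21 : ℝ)
    (hμ : 0 < μ) (hD : 0 < D) (hD1 : D ≠ 1)
    (hne : α * G15 * b ≠ 0) :
    (∃ p q : ℝ × ℝ, p ≠ q ∧
      (2 * Real.sqrt μ * p.1 =
          α * (G11 + G15 * (p.2 + b * p.1 / ((D - 1) * μ)) ^ 2) ∧
        β * G21 / D =
          2 * (Real.sqrt (μ / D) * p.2 + b * p.1 / ((D - 1) * Real.sqrt μ))) ∧
      (2 * Real.sqrt μ * q.1 =
          α * (G11 + G15 * (q.2 + b * q.1 / ((D - 1) * μ)) ^ 2) ∧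
        β * G21 / D =
          2 * (Real.sqrt (μ / D) * q.2 + b * q.1 / ((D - 1) * Real.sqrt μ))) ∧
      ∀ r : ℝ × ℝ,
        (2 * Real.sqrt μ * r.1 =
            α * (G11 + G15 * (r.2 + b * r.1 / ((D - 1) * μ)) ^ 2) ∧
          β * G21 / D =
            2 * (Real.sqrt (μ / D) * r.2 + b * r.1 / ((D - 1) * Real.sqrt μ))) →
        r = p ∨ r = q) ↔
    0 < 4 * μ + 4 * α * G15 * b / ((1 + Real.sqrt D) * μ) *
        (β * G21 / Real.sqrt D - α * b * G11 / (μ * (1 + Real.sqrt D))) := by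
  have hk : b / ((1 + √D) * μ) ≠ 0 := div_ne_zero (right_ne_zero_of_mul hne) (by positivity)
  have hlead : α * G15 * (b / ((1 + √D) * μ)) ^ 2 ≠ 0 :=
    mul_ne_zero (left_ne_zero_of_mul hne) (pow_ne_zero 2 hk)
  refine
    (Set.encard_setOf_eq_two_iff (PinnedPulseSystem μ D α β b G11 G15 G21)).symm.trans ?_
  rw [Set.encard_setOf_prod_eq_of_graph (pinnedPulseSystem_iff hμ hD hD1 α β b G11 G15 G21),
    encard_quadratic_roots_eq_two_iff hlead, discrim_two_mul_eq_sq, Real.sq_sqrt hμ.le]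
  field_simp
end

section
/- Let D > 0 with D ≠ 1, let α, b, G15, S be real numbers with α·G15·S ≠ 0, and let t be a nonzero complex number. Then the linear system in complex unknowns (C3, C4): 2t·C3 = 2α·G15·S·(C4 + b·C3/((D-1)·t^2)) and 0 = 2·(t·C4/sqrt(D) + b·C3/((D-1)·t)) has a solution (C3, C4) ≠ (0, 0) if and only if t^3 = -α·b·G15·S/(1 + sqrt(D)). -/
/-! The two matching conditions form a homogeneous linear system in `(C3, C4)`, which has a
nontrivial solution iff its determinant vanishes. Writing `s = √D`, so that `D - 1 = (s - 1)(1 + s)`,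
the determinant equals `(t³ (1 + s) + α b G15 S) / (s t (1 + s))`. -/

theorem exists_ne_zero_linear_system_iff_det_eq_zero {R : Type*} [CommRing R] [IsDomain R]
    (a b c d : R) :
    (∃ x y : R, (x, y) ≠ (0, 0) ∧ a * x + b * y = 0 ∧ c * x + d * y = 0) ↔
      a * d - b * c = 0 := by
  rw [← Matrix.det_fin_two_of, ← Matrix.exists_mulVec_eq_zero_iff]
  constructor
  · rintro ⟨x, y, hxy, h₁, h₂⟩
    refine ⟨![x, y], fun h ↦ hxy ?_, ?_⟩
    · exact Prod.ext (by simpa using congr_fun h 0) (by simpa using congr_fun h 1)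
    · ext i; fin_cases i <;> simp [Matrix.mulVec, dotProduct, Fin.sum_univ_two, h₁, h₂]
  · rintro ⟨v, hv, hMv⟩
    refine ⟨v 0, v 1, fun h ↦ hv ?_, ?_, ?_⟩
    · simp only [Prod.mk.injEq] at h
      ext i; fin_cases i <;> simp [h]
    · simpa [Matrix.mulVec, dotProduct, Fin.sum_univ_two] using congr_fun hMv 0
    · simpa [Matrix.mulVec, dotProduct, Fin.sum_univ_two] using congr_fun hMv 1

section MatchingSystem

variable {K : Type*} [Field K] {s t k b : K}

theorem matching_system_det_eq_zero_iff (hs : s ≠ 0) (hs₁ : s - 1 ≠ 0) (hs₂ : 1 + s ≠ 0)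
    (ht : t ≠ 0) :
    (t - k * b / ((s ^ 2 - 1) * t ^ 2)) * (t / s) - -k * (b / ((s ^ 2 - 1) * t)) = 0 ↔
      t ^ 3 = -(k * b) / (1 + s) := by
  have hfactor : s ^ 2 - 1 = (s - 1) * (1 + s) := by ring
  have hdet : (t - k * b / ((s ^ 2 - 1) * t ^ 2)) * (t / s) - -k * (b / ((s ^ 2 - 1) * t)) =
      (t ^ 3 * (1 + s) + k * b) / (s * t * (1 + s)) := by
    rw [hfactor]
    field_simp
    ring
  rw [hdet, div_eq_zero_iff, or_iff_left (by positivity), eq_div_iff hs₂]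
  constructor <;> intro h <;> linear_combination h

theorem matching_system_iff [CharZero K] (hs : s ≠ 0) (hs₁ : s - 1 ≠ 0) (hs₂ : 1 + s ≠ 0)
    (ht : t ≠ 0) :
    (∃ C3 C4 : K, (C3, C4) ≠ (0, 0) ∧
      2 * t * C3 = 2 * k * (C4 + b * C3 / ((s ^ 2 - 1) * t ^ 2)) ∧
      0 = 2 * (t * C4 / s + b * C3 / ((s ^ 2 - 1) * t))) ↔
    t ^ 3 = -(k * b) / (1 + s) := by
  calc _ ↔ ∃ C3 C4 : K, (C3, C4) ≠ (0, 0) ∧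
          (t - k * b / ((s ^ 2 - 1) * t ^ 2)) * C3 + -k * C4 = 0 ∧
          b / ((s ^ 2 - 1) * t) * C3 + t / s * C4 = 0 := by
        refine exists₂_congr fun C3 C4 ↦ and_congr_right' (and_congr ?_ ?_) <;>
          constructor <;> intro h
        · exact mul_left_cancel₀ two_ne_zero (by linear_combination h)
        · linear_combination 2 * h
        · exact mul_left_cancel₀ two_ne_zero (by linear_combination -h)
        · linear_combination -2 * h
    _ ↔ _ := exists_ne_zero_linear_system_iff_det_eq_zero _ _ _ _
    _ ↔ _ := matching_system_det_eq_zero_iff hs hs₁ hs₂ ht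

end MatchingSystem

theorem eigenvalue_matching_iff_cubic_general
    (D α b G15 S : ℝ) (hD : 0 < D) (hD1 : D ≠ 1)
    (t : ℂ) (ht : t ≠ 0) :
    (∃ C3 C4 : ℂ, (C3, C4) ≠ (0, 0) ∧
      2 * t * C3 =
        2 * (α : ℂ) * (G15 : ℂ) * (S : ℂ) *
          (C4 + (b : ℂ) * C3 / (((D : ℂ) - 1) * t ^ 2)) ∧
      0 = 2 * (t * C4 / (Real.sqrt D : ℂ) + (b : ℂ) * C3 / (((D : ℂ) - 1) * t))) ↔
    t ^ 3 = -((α : ℂ) * (b : ℂ) * (G15 : ℂ) * (S : ℂ)) / (1 + (Real.sqrt D : ℂ)) := by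
  have hsqrt_pos : 0 < Real.sqrt D := Real.sqrt_pos.mpr hD
  have hsqrt_ne_one : Real.sqrt D ≠ 1 := by rwa [Ne, Real.sqrt_eq_one]
  have hs : (Real.sqrt D : ℂ) ≠ 0 := by exact_mod_cast hsqrt_pos.ne'
  have hs₁ : (Real.sqrt D : ℂ) - 1 ≠ 0 := by
    rw [sub_ne_zero]; exact_mod_cast hsqrt_ne_one
  have hs₂ : 1 + (Real.sqrt D : ℂ) ≠ 0 := by exact_mod_cast (by positivity : 1 + Real.sqrt D ≠ 0)
  have hD_sq : (D : ℂ) = (Real.sqrt D : ℂ) ^ 2 := by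
    rw [← Complex.ofReal_pow, Real.sq_sqrt hD.le]
  rw [hD_sq, show 2 * (α : ℂ) * G15 * S = 2 * (α * G15 * S) by ring,
    show (α : ℂ) * b * G15 * S = α * G15 * S * b by ring]
  exact matching_system_iff hs hs₁ hs₂ ht

theorem eigenvalue_matching_iff_cubic
    (D α b G15 S : ℝ) (hD : 0 < D) (hD1 : D ≠ 1)
    (hne : α * G15 * S ≠ 0) (t : ℂ) (ht : t ≠ 0) :
    (∃ C3 C4 : ℂ, (C3, C4) ≠ (0, 0) ∧
      2 * t * C3 =
        2 * (α : ℂ) * (G15 : ℂ) * (S : ℂ) *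
          (C4 + (b : ℂ) * C3 / (((D : ℂ) - 1) * t ^ 2)) ∧
      0 = 2 * (t * C4 / (Real.sqrt D : ℂ) + (b : ℂ) * C3 / (((D : ℂ) - 1) * t))) ↔
    t ^ 3 = -((α : ℂ) * (b : ℂ) * (G15 : ℂ) * (S : ℂ)) / (1 + (Real.sqrt D : ℂ)) :=
  eigenvalue_matching_iff_cubic_general D α b G15 S hD hD1 t ht
end

section
/- Define the real numbers p = (3 + 2·sqrt(2))^(1/3), q = (3 - 2·sqrt(2))^(1/3), μ̂ = (1/12)·(4 - p - q), and ω_H = (sqrt(3)/12)·(p - q). Then μ̂ > 0 and ω_H > 0, and there exists a complex number t with Re t > 0, t² = μ̂ + i·ω_H, and t³ - t/2 + 1/(3·sqrt(3)) = 0. -/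
/-!
Put `A = ((2 + √2) / 4) ^ (1/3)` and `B = ((2 - √2) / 4) ^ (1/3)`. Then `A³ + B³ = 1` and
`AB = 1/2`, so by Cardano's formula `t = -(ω̄ A + ω B) / √3`, with `ω` a primitive cube root of
unity, solves `t³ - t/2 + 1/(3√3) = 0`; its real part is `(A + B) / (2√3) > 0`. Moreover
`p = 2A²` and `q = 2B²` (both sides cube to `3 ± 2√2`), and expanding `t²` with `AB = 1/2` gives
exactly `μ̂ + i ω_H`. Positivity of `μ̂` and `ω_H` is `0 < B < A < 1`.
-/

open Complex

theorem cardano_cube {R : Type*} [CommRing R] {ω ω' : R} (hsum : ω + ω' = -1)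
    (hprod : ω * ω' = 1) (a b : R) :
    (ω * a + ω' * b) ^ 3 = 3 * a * b * (ω * a + ω' * b) + (a ^ 3 + b ^ 3) := by
  have hω : ω ^ 3 = 1 := by linear_combination (ω - 1) * ω * hsum - (ω - 1) * hprod
  have hω' : ω' ^ 3 = 1 := by linear_combination (ω' - 1) * ω' * hsum - (ω' - 1) * hprod
  linear_combination a ^ 3 * hω + b ^ 3 * hω' + 3 * (ω * a ^ 2 * b + ω' * a * b ^ 2) * hprod

theorem Real.rpow_one_third_eq_iff {x y : ℝ} (hx : 0 ≤ x) (hy : 0 ≤ y) :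
    x ^ (1 / 3 : ℝ) = y ↔ x = y ^ 3 := by
  have h3 : (1 / 3 : ℝ) = ((3 : ℕ) : ℝ)⁻¹ := by norm_num
  rw [h3]
  constructor
  · rintro rfl
    exact (Real.rpow_inv_natCast_pow hx three_ne_zero).symm
  · rintro rfl
    exact Real.pow_rpow_inv_natCast hy three_ne_zero

lemma ofReal_sqrt_three_sq : ((√3 : ℝ) : ℂ) ^ 2 = 3 := by
  exact_mod_cast Real.sq_sqrt (by norm_num : (0 : ℝ) ≤ 3)

/-- Cardano's root `-(ω̄ A + ω B) / √3`, `ω = (-1 + √3 i) / 2`, in Cartesian form. -/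
noncomputable def cardanoRoot (A B : ℝ) : ℂ :=
  (√3 * (A + B) / 6 : ℝ) + ((A - B) / 2 : ℝ) * I

section CardanoRoot

variable {A B : ℝ}

lemma cardanoRoot_re : (cardanoRoot A B).re = √3 * (A + B) / 6 := by
  simp only [cardanoRoot, add_re, ofReal_re, re_ofReal_mul, I_re, mul_zero, add_zero]

lemma cardanoRoot_sq (hAB : A * B = 1 / 2) :
    cardanoRoot A B ^ 2 =
      ((2 - A ^ 2 - B ^ 2) / 6 : ℝ) + (√3 * (A ^ 2 - B ^ 2) / 6 : ℝ) * I := by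
  have hABC : (A : ℂ) * B = 1 / 2 := by rw [← ofReal_mul, hAB]; norm_num
  simp only [cardanoRoot]
  push_cast
  linear_combination ((A + B : ℂ) ^ 2 / 36) * ofReal_sqrt_three_sq
    + ((A - B : ℂ) ^ 2 / 4) * I_sq + (2 / 3 : ℂ) * hABC

lemma sqrt_three_mul_cardanoRoot :
    (√3 : ℂ) * cardanoRoot A B = -((-1 - √3 * I) / 2 * A + (-1 + √3 * I) / 2 * B) := by
  simp only [cardanoRoot]
  push_cast
  linear_combination ((A + B : ℂ) / 6) * ofReal_sqrt_three_sq

lemma cardanoRoot_cubic (hAB : A * B = 1 / 2) (hcubes : A ^ 3 + B ^ 3 = 1) :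
    cardanoRoot A B ^ 3 - cardanoRoot A B / 2 + 1 / (3 * (√3 : ℂ)) = 0 := by
  have hABC : (A : ℂ) * B = 1 / 2 := by rw [← ofReal_mul, hAB]; norm_num
  have hcubesC : (A : ℂ) ^ 3 + B ^ 3 = 1 := by exact_mod_cast hcubes
  set u : ℂ := (-1 - √3 * I) / 2 * A + (-1 + √3 * I) / 2 * B
  have hcardano : u ^ 3 = 3 * A * B * u + (A ^ 3 + B ^ 3) :=
    cardano_cube (by ring)
      (by linear_combination (-I ^ 2 / 4) * ofReal_sqrt_three_sq - (3 / 4 : ℂ) * I_sq) _ _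
  have hscaled :
      ((√3 : ℂ) * cardanoRoot A B) ^ 3 - 3 / 2 * ((√3 : ℂ) * cardanoRoot A B) + 1 = 0 := by
    rw [sqrt_three_mul_cardanoRoot]
    linear_combination -hcardano - 3 * u * hABC - hcubesC
  have h3 : ((√3 : ℝ) : ℂ) ≠ 0 := by
    exact_mod_cast (Real.sqrt_pos.mpr (by norm_num : (0 : ℝ) < 3)).ne'
  field_simp
  linear_combination 2 * hscaled - 2 * (√3 : ℂ) * cardanoRoot A B ^ 3 * ofReal_sqrt_three_sq

end CardanoRoot

lemma exists_cardano_pair :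
    ∃ A B : ℝ, 0 < B ∧ B < A ∧ A < 1 ∧ A * B = 1 / 2 ∧ A ^ 3 + B ^ 3 = 1 ∧
      (3 + 2 * √2) ^ (1 / 3 : ℝ) = 2 * A ^ 2 ∧ (3 - 2 * √2) ^ (1 / 3 : ℝ) = 2 * B ^ 2 := by
  have h2 : √2 ^ 2 = 2 := Real.sq_sqrt zero_le_two
  have h2lt : √2 < 3 / 2 := by nlinarith [Real.sqrt_nonneg 2]
  have hplus : 0 ≤ (2 + √2) / 4 := by positivity
  have hminus : 0 ≤ (2 - √2) / 4 := by linarith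
  set A := ((2 + √2) / 4) ^ (1 / 3 : ℝ)
  set B := ((2 - √2) / 4) ^ (1 / 3 : ℝ)
  have hA : 0 ≤ A := Real.rpow_nonneg hplus _
  have hB : 0 ≤ B := Real.rpow_nonneg hminus _
  have hA3 : A ^ 3 = (2 + √2) / 4 := ((Real.rpow_one_third_eq_iff hplus hA).1 rfl).symm
  have hB3 : B ^ 3 = (2 - √2) / 4 := ((Real.rpow_one_third_eq_iff hminus hB).1 rfl).symm
  refine ⟨A, B, ?_, ?_, ?_, ?_, ?_, ?_, ?_⟩
  · exact lt_of_pow_lt_pow_left₀ 3 hB (by rw [hB3]; linarith)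
  · exact lt_of_pow_lt_pow_left₀ 3 hA (by rw [hA3, hB3]; linarith [Real.sqrt_pos.2 two_pos])
  · exact (pow_lt_one_iff_of_nonneg hA three_ne_zero).1 (by rw [hA3]; linarith)
  · refine (pow_left_inj₀ (mul_nonneg hA hB) (by norm_num) three_ne_zero).1 ?_
    rw [mul_pow, hA3, hB3]
    linear_combination (-1 / 16 : ℝ) * h2
  · rw [hA3, hB3]; ring
  · refine (Real.rpow_one_third_eq_iff (by positivity) (by positivity)).2 ?_
    rw [show (2 * A ^ 2) ^ 3 = 8 * (A ^ 3) ^ 2 by ring, hA3]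
    linear_combination (-1 / 2 : ℝ) * h2
  · refine (Real.rpow_one_third_eq_iff (by linarith) (by positivity)).2 ?_
    rw [show (2 * B ^ 2) ^ 3 = 8 * (B ^ 3) ^ 2 by ring, hB3]
    linear_combination (-1 / 2 : ℝ) * h2

open Complex in
theorem concrete_example_hopf_point
    (p q μhat ωH : ℝ)
    (hp : p = (3 + 2 * Real.sqrt 2) ^ ((1 : ℝ) / 3))
    (hq : q = (3 - 2 * Real.sqrt 2) ^ ((1 : ℝ) / 3))
    (hμ : μhat = (1 / 12) * (4 - p - q))
    (hω : ωH = (Real.sqrt 3 / 12) * (p - q)) :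
    0 < μhat ∧ 0 < ωH ∧
      ∃ t : ℂ, 0 < t.re ∧ t ^ 2 = (μhat : ℂ) + (ωH : ℂ) * I ∧
        t ^ 3 - t / 2 + 1 / (3 * (Real.sqrt 3 : ℂ)) = 0 := by
  obtain ⟨A, B, hB, hBA, hA1, hAB, hcubes, hpA, hqB⟩ := exists_cardano_pair
  rw [hpA] at hp
  rw [hqB] at hq
  subst hp hq hμ hω
  refine ⟨by nlinarith, mul_pos (by positivity) (by nlinarith), cardanoRoot A B, ?_, ?_,
    cardanoRoot_cubic hAB hcubes⟩
  · have hA : 0 < A := hB.trans hBA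
    rw [cardanoRoot_re]
    positivity
  · rw [cardanoRoot_sq hAB]
    push_cast
    ring
end
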